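/- Suppose the pair (A, Δ_η) is η-robustly mixed (ℓ^q, ℓ^1)-instance optimal of order s with constants C, D relative to a norm ‖·‖ on ℂ^m. Then for every x ∈ ℂ^N and e ∈ ℂ^m, ‖x − Δ_η(Ax + e)‖_q ≤ C σ_s(x)_1 / s^(1−1/q) + s^(1/q−1/2) (D η + E max{‖e‖ − η, 0}), where E = max{C, 1} · Q_s(A)_{q,1}. -/

import Mathlib

open scoped ENNReal

noncomputable def lpNorm {n : ℕ} (p : ℝ) (x : Fin n → ℂ) : ℝ :=
  (∑ i, ‖x i‖ ^ p) ^ (1 / p)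

/-- Best `s`-term approximation error of `x` in the `ℓ^1` norm. -/
noncomputable def bestApprox1 {n : ℕ} (s : ℕ) (x : Fin n → ℂ) : ℝ :=
  sInf ((fun w => lpNorm 1 (x - w)) ''
    {w : Fin n → ℂ | ∃ S : Finset (Fin n), S.card ≤ s ∧ ∀ i ∉ S, w i = 0})

/-- Simultaneous `(ℓ^q, ℓ^1)`-quotient of order `s` of `A`, relative to `nn`
(`⊤` if some feasible set is empty). -/
noncomputable def quotSimul {m N : ℕ} (A : Matrix (Fin m) (Fin N) ℂ)
    (nn : (Fin m → ℂ) → ℝ) (q : ℝ) (s : ℕ) : ℝ≥0∞ :=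
  ⨆ e ∈ {e : Fin m → ℂ | e ≠ 0},
    ⨅ z ∈ {z : Fin N → ℂ | A.mulVec z = e},
      ENNReal.ofReal
        (((s : ℝ) ^ ((1 : ℝ) / 2 - 1 / q) * lpNorm q z
            + (s : ℝ) ^ (-(1 : ℝ) / 2) * lpNorm 1 z) / nn e)

/-!
If `‖e‖ ≤ η` this is the instance optimality itself. Otherwise split `e = e₁ + e₂` with
`‖e₁‖ = η` and `‖e₂‖ = ‖e‖ - η`, and for any `r > Q_s(A)_{q,1}` pick `z` with `Az = e₂` and
`s^(1/2-1/q) ‖z‖_q + s^(-1/2) ‖z‖_1 ≤ r ‖e₂‖`. Since `Ax + e = A(x + z) + e₁`, the decoder sees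
`x + z` measured with admissible error `e₁`; the instance-optimality bound for `x + z`, the
triangle inequality and `σ_s(x + z)₁ ≤ σ_s(x)₁ + ‖z‖₁` then leave an excess controlled by
the mixed norm of `z`.
-/

/-- The numerator of the quotient in `quotSimul`. -/
noncomputable def mixedNorm {n : ℕ} (q : ℝ) (s : ℕ) (z : Fin n → ℂ) : ℝ :=
  (s : ℝ) ^ ((1 : ℝ) / 2 - 1 / q) * lpNorm q z + (s : ℝ) ^ (-(1 : ℝ) / 2) * lpNorm 1 z

def RobustInstanceOptimal {m N : ℕ} (A : Matrix (Fin m) (Fin N) ℂ)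
    (nn : (Fin m → ℂ) → ℝ) (Δ : (Fin m → ℂ) → Set (Fin N → ℂ)) (η q : ℝ) (s : ℕ)
    (C D : ℝ) : Prop :=
  ∀ x : Fin N → ℂ, ∀ e : Fin m → ℂ, nn e ≤ η →
    ∀ x' ∈ Δ (A.mulVec x + e),
      lpNorm q (x - x') ≤ C * (s : ℝ) ^ ((1 : ℝ) / q - 1) * bestApprox1 s x
        + D * (s : ℝ) ^ ((1 : ℝ) / q - 1 / 2) * η

section LpNorm

variable {n : ℕ}

lemma lpNorm_nonneg (p : ℝ) (x : Fin n → ℂ) : 0 ≤ lpNorm p x :=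
  Real.rpow_nonneg (Finset.sum_nonneg fun _ _ => Real.rpow_nonneg (norm_nonneg _) _) _

lemma lpNorm_neg (p : ℝ) (x : Fin n → ℂ) : lpNorm p (-x) = lpNorm p x := by
  simp [lpNorm]

lemma lpNorm_add_le {q : ℝ} (hq : 1 ≤ q) (a b : Fin n → ℂ) :
    lpNorm q (a + b) ≤ lpNorm q a + lpNorm q b := by
  unfold lpNorm
  calc (∑ i, ‖(a + b) i‖ ^ q) ^ (1 / q)
      ≤ (∑ i, (‖a i‖ + ‖b i‖) ^ q) ^ (1 / q) := by
        gcongr with i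
        exact norm_add_le _ _
    _ ≤ _ := Real.Lp_add_le_of_nonneg (s := Finset.univ) hq (fun i _ => norm_nonneg (a i))
        (fun i _ => norm_nonneg (b i))

lemma bestApprox1_add_le (s : ℕ) (x z : Fin n → ℂ) :
    bestApprox1 s (x + z) ≤ bestApprox1 s x + lpNorm 1 z := by
  rw [← sub_le_iff_le_add]
  refine le_csInf ⟨_, ⟨0, ⟨∅, by simp⟩, rfl⟩⟩ ?_
  rintro _ ⟨w, hw, rfl⟩
  rw [sub_le_iff_le_add]
  calc bestApprox1 s (x + z) ≤ lpNorm 1 ((x + z) - w) :=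
        csInf_le ⟨0, by rintro _ ⟨v, -, rfl⟩; exact lpNorm_nonneg _ _⟩ ⟨w, hw, rfl⟩
    _ = lpNorm 1 ((x - w) + z) := by congr 1; abel
    _ ≤ lpNorm 1 (x - w) + lpNorm 1 z := lpNorm_add_le le_rfl _ _

end LpNorm

lemma exists_split_of_lt {V : Type*} [AddCommGroup V] [Module ℂ V] {nn : V → ℝ}
    (nn_smul : ∀ (c : ℂ) x, nn (c • x) = ‖c‖ * nn x) {η : ℝ} (hη : 0 ≤ η) {e : V}
    (hlt : η < nn e) : ∃ e₂, nn e₂ = nn e - η ∧ nn (e - e₂) = η := by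
  have hpos : 0 < nn e := hη.trans_lt hlt
  have nn_real_smul : ∀ r : ℝ, 0 ≤ r → nn ((r : ℂ) • e) = r * nn e := fun r hr => by
    rw [nn_smul, Complex.norm_real, Real.norm_of_nonneg hr]
  refine ⟨(((nn e - η) / nn e : ℝ) : ℂ) • e, ?_, ?_⟩
  · rw [nn_real_smul _ (div_nonneg (sub_pos.2 hlt).le hpos.le), div_mul_cancel₀ _ hpos.ne']
  · have : e - (((nn e - η) / nn e : ℝ) : ℂ) • e = ((η / nn e : ℝ) : ℂ) • e := by
      rw [← one_smul ℂ e, smul_smul, ← sub_smul, one_smul]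
      congr 1
      have : (nn e : ℂ) ≠ 0 := by exact_mod_cast hpos.ne'
      push_cast
      rw [sub_div, div_self this]
      ring
    rw [this, nn_real_smul _ (div_nonneg hη hpos.le), div_mul_cancel₀ _ hpos.ne']

lemma exists_mulVec_eq_mixedNorm_le {m N : ℕ} {A : Matrix (Fin m) (Fin N) ℂ}
    {nn : (Fin m → ℂ) → ℝ} {q : ℝ} {s : ℕ} {e : Fin m → ℂ} (he : e ≠ 0) (hpos : 0 < nn e)
    {r : ℝ} (hr : quotSimul A nn q s < ENNReal.ofReal r) :
    ∃ z, A.mulVec z = e ∧ mixedNorm q s z ≤ r * nn e := by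
  have hinf : ⨅ z ∈ {z : Fin N → ℂ | A.mulVec z = e},
      ENNReal.ofReal (mixedNorm q s z / nn e) < ENNReal.ofReal r :=
    lt_of_le_of_lt (le_iSup₂_of_le (f := fun e (_ : e ∈ {e : Fin m → ℂ | e ≠ 0}) =>
      ⨅ z ∈ {z : Fin N → ℂ | A.mulVec z = e}, ENNReal.ofReal (mixedNorm q s z / nn e))
      e he le_rfl) hr
  simp only [iInf_lt_iff, Set.mem_ofPred_eq, exists_prop, ENNReal.ofReal_lt_ofReal_iff'] at hinf
  obtain ⟨z, hz, hlt, -⟩ := hinf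
  exact ⟨z, hz, ((div_lt_iff₀ hpos).1 hlt).le⟩

lemma mul_lpNorm_add_lpNorm_le_mixedNorm {n s : ℕ} (hs : 1 ≤ s) (q C : ℝ)
    (z : Fin n → ℂ) :
    C * (s : ℝ) ^ ((1 : ℝ) / q - 1) * lpNorm 1 z + lpNorm q z
      ≤ (s : ℝ) ^ ((1 : ℝ) / q - 1 / 2) * max C 1 * mixedNorm q s z := by
  have hs0 : (0 : ℝ) < s := by exact_mod_cast hs
  have hcancel : (s : ℝ) ^ ((1 : ℝ) / q - 1 / 2) * (s : ℝ) ^ ((1 : ℝ) / 2 - 1 / q) = 1 := by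
    rw [← Real.rpow_add hs0]; norm_num
  have h1 : (s : ℝ) ^ ((1 : ℝ) / q - 1 / 2) * (s : ℝ) ^ (-(1 : ℝ) / 2)
      = (s : ℝ) ^ ((1 : ℝ) / q - 1) := by
    rw [← Real.rpow_add hs0]; ring_nf
  have hrhs : (s : ℝ) ^ ((1 : ℝ) / q - 1 / 2) * max C 1 * mixedNorm q s z
      = max C 1 * ((s : ℝ) ^ ((1 : ℝ) / q - 1) * lpNorm 1 z) + max C 1 * lpNorm q z := by
    rw [mixedNorm, ← h1]
    linear_combination (max C 1 * lpNorm q z) * hcancel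
  rw [hrhs, mul_assoc]
  gcongr
  · exact mul_nonneg (Real.rpow_nonneg hs0.le _) (lpNorm_nonneg _ _)
  · exact le_max_left _ _
  · exact le_mul_of_one_le_left (lpNorm_nonneg _ _) (le_max_right _ _)

/-- The decoder cannot distinguish `x` with error `e` from `x + z` with error `e - Az`. -/
lemma RobustInstanceOptimal.lpNorm_sub_le {m N : ℕ} {A : Matrix (Fin m) (Fin N) ℂ}
    {nn : (Fin m → ℂ) → ℝ} {Δ : (Fin m → ℂ) → Set (Fin N → ℂ)} {η q : ℝ} {s : ℕ} {C D : ℝ}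
    (hIO : RobustInstanceOptimal A nn Δ η q s C D) (hq : 1 ≤ q) (hC : 0 ≤ C)
    {x z x' : Fin N → ℂ} {e : Fin m → ℂ} (he : nn (e - A.mulVec z) ≤ η)
    (hx' : x' ∈ Δ (A.mulVec x + e)) :
    lpNorm q (x - x') ≤ C * (s : ℝ) ^ ((1 : ℝ) / q - 1) * bestApprox1 s x
        + D * (s : ℝ) ^ ((1 : ℝ) / q - 1 / 2) * η
      + (C * (s : ℝ) ^ ((1 : ℝ) / q - 1) * lpNorm 1 z + lpNorm q z) := by
  have hmeas : A.mulVec (x + z) + (e - A.mulVec z) = A.mulVec x + e := by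
    rw [Matrix.mulVec_add]; abel
  have hbound := hIO (x + z) _ he x' (hmeas ▸ hx')
  have hσ := mul_le_mul_of_nonneg_left (bestApprox1_add_le s x z)
    (mul_nonneg hC (Real.rpow_nonneg (Nat.cast_nonneg s) ((1 : ℝ) / q - 1)))
  calc lpNorm q (x - x') = lpNorm q ((x + z - x') + -z) := by congr 1; abel
    _ ≤ lpNorm q (x + z - x') + lpNorm q z := by
        simpa only [lpNorm_neg] using lpNorm_add_le hq (x + z - x') (-z)
    _ ≤ _ := by linarith

lemma ofReal_le_ofReal_add_mul_of_forall_lt {L a b : ℝ} {Q : ℝ≥0∞} (hb : 0 < b)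
    (h : ∀ r : ℝ, Q < ENNReal.ofReal r → L ≤ a + b * r) :
    ENNReal.ofReal L ≤ ENNReal.ofReal a + ENNReal.ofReal b * Q := by
  rcases eq_or_ne Q ⊤ with rfl | hQ
  · simp [ENNReal.mul_top, hb]
  have hL : L ≤ a + b * Q.toReal := by
    have : (L - a) / b ≤ Q.toReal := le_of_forall_gt_imp_ge_of_dense fun r hr => by
      rw [div_le_iff₀ hb]
      linarith [h r ((ENNReal.lt_ofReal_iff_toReal_lt hQ).2 hr)]
    rw [div_le_iff₀ hb] at this
    linarith
  calc ENNReal.ofReal L ≤ ENNReal.ofReal (a + b * Q.toReal) := ENNReal.ofReal_le_ofReal hL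
    _ ≤ ENNReal.ofReal a + ENNReal.ofReal (b * Q.toReal) := ENNReal.ofReal_add_le
    _ = ENNReal.ofReal a + ENNReal.ofReal b * Q := by
        rw [ENNReal.ofReal_mul hb.le, ENNReal.ofReal_toReal hQ]

theorem stmt6_general {m N : ℕ} (A : Matrix (Fin m) (Fin N) ℂ)
    (nn : (Fin m → ℂ) → ℝ)
    (nn_smul : ∀ (c : ℂ) x, nn (c • x) = ‖c‖ * nn x)
    (η : ℝ) (hη : 0 ≤ η) (q : ℝ) (hq : 1 ≤ q)
    (s : ℕ) (hs : 1 ≤ s)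
    (Δ : (Fin m → ℂ) → Set (Fin N → ℂ))
    (C D : ℝ) (hC : 0 < C)
    -- η-robust mixed (ℓ^q, ℓ^1)-instance optimality of order s
    (hIO : ∀ x : Fin N → ℂ, ∀ e : Fin m → ℂ, nn e ≤ η →
      ∀ x' ∈ Δ (A.mulVec x + e),
        lpNorm q (x - x') ≤ C * (s : ℝ) ^ ((1 : ℝ) / q - 1) * bestApprox1 s x
          + D * (s : ℝ) ^ ((1 : ℝ) / q - 1 / 2) * η)
    (x : Fin N → ℂ) (e : Fin m → ℂ) (x' : Fin N → ℂ)
    (hx' : x' ∈ Δ (A.mulVec x + e)) :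
    ENNReal.ofReal (lpNorm q (x - x')) ≤
      ENNReal.ofReal (C * (s : ℝ) ^ ((1 : ℝ) / q - 1) * bestApprox1 s x
          + D * (s : ℝ) ^ ((1 : ℝ) / q - 1 / 2) * η)
      + ENNReal.ofReal ((s : ℝ) ^ ((1 : ℝ) / q - 1 / 2) * max C 1 * max (nn e - η) 0)
          * quotSimul A nn q s := by
  rcases le_or_gt (nn e) η with hle | hlt
  · rw [max_eq_right (sub_nonpos.2 hle), mul_zero, ENNReal.ofReal_zero, zero_mul, add_zero]
    exact ENNReal.ofReal_le_ofReal (hIO x e hle x' hx')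
  obtain ⟨e₂, he₂, he₁⟩ := exists_split_of_lt nn_smul hη hlt
  have hpos : 0 < nn e₂ := he₂ ▸ sub_pos.2 hlt
  have he₂0 : e₂ ≠ 0 := by
    rintro rfl
    have hzero := nn_smul 0 0
    rw [zero_smul, norm_zero, zero_mul] at hzero
    exact hpos.ne' hzero
  have hK : 0 < (s : ℝ) ^ ((1 : ℝ) / q - 1 / 2) * max C 1 :=
    mul_pos (Real.rpow_pos_of_pos (by exact_mod_cast hs) _) (lt_max_of_lt_right one_pos)
  rw [max_eq_left (sub_pos.2 hlt).le, ← he₂]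
  refine ofReal_le_ofReal_add_mul_of_forall_lt (mul_pos hK hpos) fun r hr => ?_
  obtain ⟨z, hz, hzr⟩ := exists_mulVec_eq_mixedNorm_le he₂0 hpos hr
  have hx := RobustInstanceOptimal.lpNorm_sub_le hIO hq hC.le (hz ▸ he₁.le) hx'
  have hmixed := mul_lpNorm_add_lpNorm_le_mixedNorm hs q C z
  have hKz := mul_le_mul_of_nonneg_left hzr hK.le
  linarith

/-- Robust instance optimality implies robustness to unknown error: if `(A, Δ)` is
`η`-robustly mixed `(ℓ^q, ℓ^1)`-instance optimal of order `s` with constants `C, D`,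
then for every `x`, `e`, every `x' ∈ Δ(Ax + e)` satisfies
`‖x − x'‖_q ≤ C σ_s(x)₁ / s^(1−1/q) + s^(1/q−1/2) (D η + E max{‖e‖−η, 0})`
with `E = max{C,1} Q_s(A)_{q,1}`. -/
theorem stmt6 {m N : ℕ} (A : Matrix (Fin m) (Fin N) ℂ)
    (nn : (Fin m → ℂ) → ℝ)
    (nn_add : ∀ x y, nn (x + y) ≤ nn x + nn y)
    (nn_smul : ∀ (c : ℂ) x, nn (c • x) = ‖c‖ * nn x)
    (nn_eq_zero : ∀ x, nn x = 0 ↔ x = 0)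
    (η : ℝ) (hη : 0 ≤ η) (q : ℝ) (hq : 1 ≤ q)
    (s : ℕ) (hs : 1 ≤ s) (hsm : s ≤ m)
    (Δ : (Fin m → ℂ) → Set (Fin N → ℂ))
    (C D : ℝ) (hC : 0 < C) (hD : 0 < D)
    -- η-robust mixed (ℓ^q, ℓ^1)-instance optimality of order s
    (hIO : ∀ x : Fin N → ℂ, ∀ e : Fin m → ℂ, nn e ≤ η →
      ∀ x' ∈ Δ (A.mulVec x + e),
        lpNorm q (x - x') ≤ C * (s : ℝ) ^ ((1 : ℝ) / q - 1) * bestApprox1 s x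
          + D * (s : ℝ) ^ ((1 : ℝ) / q - 1 / 2) * η)
    (x : Fin N → ℂ) (e : Fin m → ℂ) (x' : Fin N → ℂ)
    (hx' : x' ∈ Δ (A.mulVec x + e)) :
    ENNReal.ofReal (lpNorm q (x - x')) ≤
      ENNReal.ofReal (C * (s : ℝ) ^ ((1 : ℝ) / q - 1) * bestApprox1 s x
          + D * (s : ℝ) ^ ((1 : ℝ) / q - 1 / 2) * η)
      + ENNReal.ofReal ((s : ℝ) ^ ((1 : ℝ) / q - 1 / 2) * max C 1 * max (nn e - η) 0)
          * quotSimul A nn q s :=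
  stmt6_general A nn nn_smul η hη q hq s hs Δ C D hC hIO x e x' hx'
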